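/- arXiv:2511.02083 — 4 statements merged into one kernel-verified Lean document; each statement's English description precedes it below -/
import Mathlib

section
/- For every y₀ ∈ Fin n, the probability that ln(R_{y₀})/p_{y₀} ≥ ln(R_z)/p_z holds simultaneously for all z ≠ y₀ equals p_{y₀}. (Gumbel-max trick: the watermarked sampling rule selects token y₀ with exactly its model probability, hence is distribution-preserving.) -/
/-!
Conditionally on `R y₀ = t ∈ (0, 1]`, the event asks `R z ≤ t ^ (p z / p y₀)` for every
`z ≠ y₀`. By independence this has probability `∏_{z ≠ y₀} t ^ (p z / p y₀) = t ^ (1 / p y₀ - 1)`,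
since the `p z` sum to `1`, and `∫₀¹ t ^ (1 / p y₀ - 1) dt = p y₀`.
-/

open MeasureTheory ProbabilityTheory Set

theorem volume_restrict_Ioc_zero_one_log_le {c : ℝ} (hc : c ≤ 0) :
    volume.restrict (Ioc (0 : ℝ) 1) {x | Real.log x ≤ c} = ENNReal.ofReal (Real.exp c) := by
  have hset : {x | Real.log x ≤ c} ∩ Ioc 0 1 = Ioc 0 (Real.exp c) := by
    ext x
    simp only [mem_inter_iff, mem_ofPred_eq, mem_Ioc]
    constructor
    · rintro ⟨hlog, hx, -⟩
      exact ⟨hx, (Real.log_le_iff_le_exp hx).1 hlog⟩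
    · rintro ⟨hx, hxc⟩
      exact ⟨(Real.log_le_iff_le_exp hx).2 hxc, hx, hxc.trans (Real.exp_le_one_iff.2 hc)⟩
  rw [Measure.restrict_apply (measurableSet_le Real.measurable_log measurable_const), hset,
    Real.volume_Ioc, sub_zero]

theorem volume_restrict_Ioc_zero_one_log_div_le {a b t : ℝ} (ha : 0 < a) (hb : 0 < b)
    (ht : t ∈ Ioc (0 : ℝ) 1) :
    volume.restrict (Ioc (0 : ℝ) 1) {x | Real.log x / a ≤ Real.log t / b}
      = ENNReal.ofReal (t ^ (a / b)) := by
  have hset : {x | Real.log x / a ≤ Real.log t / b}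
      = {x | Real.log x ≤ Real.log t * (a / b)} := by
    ext x
    rw [mem_ofPred_eq, mem_ofPred_eq, div_le_iff₀ ha, div_mul_eq_mul_div, mul_div_assoc]
  rw [hset, volume_restrict_Ioc_zero_one_log_le, Real.rpow_def_of_pos ht.1]
  exact mul_nonpos_of_nonpos_of_nonneg (Real.log_nonpos ht.1.le ht.2) (by positivity)

theorem prod_volume_restrict_Ioc_zero_one_log_div_le {ι : Type*} (s : Finset ι) {a : ι → ℝ}
    (ha : ∀ j, 0 < a j) {b t : ℝ} (hb : 0 < b) (ht : t ∈ Ioc (0 : ℝ) 1) :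
    ∏ j ∈ s, volume.restrict (Ioc (0 : ℝ) 1) {x | Real.log x / a j ≤ Real.log t / b}
      = ENNReal.ofReal (t ^ (∑ j ∈ s, a j / b)) := by
  simp only [volume_restrict_Ioc_zero_one_log_div_le (ha _) hb ht]
  rw [← ENNReal.ofReal_prod_of_nonneg fun j _ => Real.rpow_nonneg ht.1.le _,
    ← Real.rpow_sum_of_pos ht.1]

theorem lintegral_Ioc_zero_one_ofReal_rpow_sub_one {q : ℝ} (hq : 0 < q) :
    ∫⁻ t in Ioc (0 : ℝ) 1, ENNReal.ofReal (t ^ (q - 1)) = ENNReal.ofReal q⁻¹ := by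
  have hint : IntegrableOn (fun t : ℝ => t ^ (q - 1)) (Ioc 0 1) := by
    rw [← intervalIntegrable_iff_integrableOn_Ioc_of_le zero_le_one]
    exact intervalIntegral.intervalIntegrable_rpow' (by linarith)
  have hnonneg : 0 ≤ᵐ[volume.restrict (Ioc (0 : ℝ) 1)] fun t : ℝ => t ^ (q - 1) := by
    filter_upwards [self_mem_ae_restrict measurableSet_Ioc] with t ht
    exact Real.rpow_nonneg ht.1.le _
  rw [← ofReal_integral_eq_lintegral_ofReal hint hnonneg,
    ← intervalIntegral.integral_of_le zero_le_one, integral_rpow (Or.inl (by linarith)),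
    sub_add_cancel, Real.one_rpow, Real.zero_rpow hq.ne', sub_zero, one_div]

section SplitCoordinate

variable {α : Type*} [MeasurableSpace α] {m : ℕ} {S : Fin m → Set (α × α)}

theorem measurableSet_forall_succAbove_mem (hS : ∀ j, MeasurableSet (S j))
    (i : Fin (m + 1)) :
    MeasurableSet {x : Fin (m + 1) → α | ∀ j, (x i, x (i.succAbove j)) ∈ S j} := by
  simp only [ofPred_forall]
  exact .iInter fun j => (measurable_pi_apply i).prodMk (measurable_pi_apply _) (hS j)

theorem MeasureTheory.Measure.pi_forall_succAbove_mem_eq_lintegral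
    (μ : Fin (m + 1) → Measure α) [∀ k, SigmaFinite (μ k)] (hS : ∀ j, MeasurableSet (S j))
    (i : Fin (m + 1)) :
    Measure.pi μ {x | ∀ j, (x i, x (i.succAbove j)) ∈ S j}
      = ∫⁻ t, ∏ j, μ (i.succAbove j) (Prod.mk t ⁻¹' S j) ∂μ i := by
  set B : Set (α × (Fin m → α)) := {q | ∀ j, (q.1, q.2 j) ∈ S j}
  have hB : MeasurableSet B := by
    simp only [B, ofPred_forall]
    exact .iInter fun j =>
      measurable_fst.prodMk ((measurable_pi_apply j).comp measurable_snd) (hS j)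
  have hslice (t : α) : Prod.mk t ⁻¹' B = univ.pi fun j => Prod.mk t ⁻¹' S j := by
    ext y; simp [B]
  rw [show {x | ∀ j, (x i, x (i.succAbove j)) ∈ S j}
      = MeasurableEquiv.piFinSuccAbove (fun _ => α) i ⁻¹' B from rfl,
    (measurePreserving_piFinSuccAbove μ i).measure_preimage_equiv, Measure.prod_apply hB]
  simp only [hslice, Measure.pi_pi]

theorem ProbabilityTheory.iIndepFun.measure_forall_succAbove_mem_eq_lintegral
    {Ω : Type*} [MeasurableSpace Ω] {P : Measure Ω} {X : Fin (m + 1) → Ω → α}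
    (hX : ∀ k, Measurable (X k)) (hindep : iIndepFun X P) (hS : ∀ j, MeasurableSet (S j))
    (i : Fin (m + 1)) :
    P {ω | ∀ j, (X i ω, X (i.succAbove j) ω) ∈ S j}
      = ∫⁻ t, ∏ j, P.map (X (i.succAbove j)) (Prod.mk t ⁻¹' S j) ∂P.map (X i) := by
  have := hindep.isProbabilityMeasure
  have _ k := Measure.isProbabilityMeasure_map (hX k).aemeasurable (μ := P)
  calc P {ω | ∀ j, (X i ω, X (i.succAbove j) ω) ∈ S j}
      = P.map (fun ω k => X k ω) {x | ∀ j, (x i, x (i.succAbove j)) ∈ S j} :=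
        (Measure.map_apply (measurable_pi_lambda _ hX)
          (measurableSet_forall_succAbove_mem hS i)).symm
    _ = _ := by
      rw [hindep.map_fun_eq_pi_map fun k => (hX k).aemeasurable]
      exact Measure.pi_forall_succAbove_mem_eq_lintegral _ hS i

end SplitCoordinate

theorem gumbel_max_selects_with_model_probability_general
    {Ω : Type*} [MeasureSpace Ω]
    {n : ℕ} (R : Fin n → Ω → ℝ) (hmeas : ∀ y, Measurable (R y))
    (hindep : iIndepFun (m := fun _ => Real.measurableSpace) R ℙ)
    (hunif : ∀ y, (ℙ : Measure Ω).map (R y) = volume.restrict (Set.Icc (0:ℝ) 1))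
    (p : Fin n → ℝ) (hp : ∀ y, 0 < p y) (hsum : ∑ y, p y = 1)
    (y₀ : Fin n) :
    ℙ {ω | ∀ z, z ≠ y₀ → Real.log (R z ω) / p z ≤ Real.log (R y₀ ω) / p y₀}
      = ENNReal.ofReal (p y₀) := by
  obtain ⟨m, rfl⟩ := Nat.exists_eq_add_one_of_ne_zero y₀.pos.ne'
  -- Uniform on `(0, 1]` rather than `[0, 1]`, so that the junk value `log 0 = 0` never enters.
  have hlaw (y : Fin (m + 1)) : (ℙ : Measure Ω).map (R y) = volume.restrict (Ioc 0 1) := by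
    rw [hunif, Measure.restrict_congr_set Ioc_ae_eq_Icc]
  set S : Fin m → Set (ℝ × ℝ) :=
    fun j => {q | Real.log q.2 / p (y₀.succAbove j) ≤ Real.log q.1 / p y₀}
  have hS (j : Fin m) : MeasurableSet (S j) :=
    measurableSet_le ((Real.measurable_log.comp measurable_snd).div_const _)
      ((Real.measurable_log.comp measurable_fst).div_const _)
  have hevent : {ω | ∀ z, z ≠ y₀ → Real.log (R z ω) / p z ≤ Real.log (R y₀ ω) / p y₀}
      = {ω | ∀ j, (R y₀ ω, R (y₀.succAbove j) ω) ∈ S j} := by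
    ext ω
    simp [Fin.forall_iff_succAbove y₀, S, Fin.succAbove_ne]
  have hexponent : ∑ j, p (y₀.succAbove j) / p y₀ = (p y₀)⁻¹ - 1 := by
    have hrest : ∑ j, p (y₀.succAbove j) = 1 - p y₀ := by
      linarith [Fin.sum_univ_succAbove p y₀]
    rw [← Finset.sum_div, hrest, sub_div, div_self (hp y₀).ne', one_div]
  have hslice : ∀ t ∈ Ioc (0 : ℝ) 1, ∏ j, volume.restrict (Ioc (0 : ℝ) 1) (Prod.mk t ⁻¹' S j)
      = ENNReal.ofReal (t ^ ((p y₀)⁻¹ - 1)) := fun t ht => by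
    rw [← hexponent, ← prod_volume_restrict_Ioc_zero_one_log_div_le _ (fun _ => hp _) (hp y₀) ht]
    rfl
  rw [hevent, hindep.measure_forall_succAbove_mem_eq_lintegral hmeas hS]
  simp only [hlaw]
  rw [setLIntegral_congr_fun measurableSet_Ioc hslice,
    lintegral_Ioc_zero_one_ofReal_rpow_sub_one (inv_pos.2 (hp y₀)), inv_inv]

/-- **Gumbel-max trick (distribution preservation).**
Let `R y`, `y : Fin n`, be independent random variables, each uniform on `[0,1]`,
and let `p` be a probability vector with strictly positive entries. Then for every
token `y₀`, the probability that `log (R y₀) / p y₀ ≥ log (R z) / p z` holds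
simultaneously for all `z ≠ y₀` is exactly `p y₀`. -/
theorem gumbel_max_selects_with_model_probability
    {Ω : Type*} [MeasureSpace Ω] [IsProbabilityMeasure (ℙ : Measure Ω)]
    {n : ℕ} (R : Fin n → Ω → ℝ) (hmeas : ∀ y, Measurable (R y))
    (hindep : iIndepFun (m := fun _ => Real.measurableSpace) R ℙ)
    (hunif : ∀ y, (ℙ : Measure Ω).map (R y) = volume.restrict (Set.Icc (0:ℝ) 1))
    (p : Fin n → ℝ) (hp : ∀ y, 0 < p y) (hsum : ∑ y, p y = 1)
    (y₀ : Fin n) :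
    ℙ {ω | ∀ z, z ≠ y₀ → Real.log (R z ω) / p z ≤ Real.log (R y₀ ω) / p y₀}
      = ENNReal.ofReal (p y₀) :=
  gumbel_max_selects_with_model_probability_general R hmeas hindep hunif p hp hsum y₀
end

section
/- For every y₀ ∈ Fin n, the probability that the (almost surely unique) argmax of y ↦ ln(R_y)/p_y equals y₀ is exactly p_{y₀}. -/
open MeasureTheory ProbabilityTheory

/-!
Condition on `x = R y₀`. For `z ≠ y₀` the event `log (R z) / p z < log x / p y₀` is
`R z < x ^ (p z / p y₀)`, of probability `x ^ (p z / p y₀)`; by independence the conditional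
probability of the whole event is `x ^ ((1 - p y₀) / p y₀)`, and
`∫₀¹ x ^ (1 / p y₀ - 1) dx = p y₀`.
-/

open Set Real

section ConditionOnCoordinate

variable {α : Type*} [MeasurableSpace α] {m : ℕ} {E : Fin m → Set (α × α)}

lemma measurableSet_setOf_forall_fst_snd_mem (hE : ∀ j, MeasurableSet (E j)) :
    MeasurableSet {q : α × (Fin m → α) | ∀ j, (q.1, q.2 j) ∈ E j} := by
  simp only [ofPred_forall]
  exact .iInter fun j => measurable_fst.prodMk ((measurable_pi_apply j).comp measurable_snd) (hE j)

lemma MeasureTheory.Measure.pi_setOf_forall_succAbove_mem (μ : Fin (m + 1) → Measure α)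
    [∀ i, SigmaFinite (μ i)] (i : Fin (m + 1)) (hE : ∀ j, MeasurableSet (E j)) :
    Measure.pi μ {u | ∀ j, (u i, u (i.succAbove j)) ∈ E j}
      = ∫⁻ x, ∏ j, μ (i.succAbove j) (Prod.mk x ⁻¹' E j) ∂μ i := by
  have hT := measurableSet_setOf_forall_fst_snd_mem hE
  have hslice (x : α) : Prod.mk x ⁻¹' {q : α × (Fin m → α) | ∀ j, (q.1, q.2 j) ∈ E j}
      = pi univ fun j => Prod.mk x ⁻¹' E j := by
    ext v; simp
  rw [show {u : Fin (m + 1) → α | ∀ j, (u i, u (i.succAbove j)) ∈ E j}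
      = MeasurableEquiv.piFinSuccAbove (fun _ => α) i ⁻¹'
        {q : α × (Fin m → α) | ∀ j, (q.1, q.2 j) ∈ E j} from rfl,
    (measurePreserving_piFinSuccAbove μ i).measure_preimage hT.nullMeasurableSet]
  simp_rw [Measure.prod_apply hT, hslice, Measure.pi_pi]

variable {Ω : Type*} [MeasurableSpace Ω] {P : Measure Ω} {X : Fin (m + 1) → Ω → α}

lemma ProbabilityTheory.iIndepFun.measure_forall_succAbove_mem (hX : ∀ i, Measurable (X i))
    (hind : iIndepFun X P) (i : Fin (m + 1)) (hE : ∀ j, MeasurableSet (E j)) :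
    P {ω | ∀ j, (X i ω, X (i.succAbove j) ω) ∈ E j}
      = ∫⁻ x, ∏ j, P.map (X (i.succAbove j)) (Prod.mk x ⁻¹' E j) ∂P.map (X i) := by
  have := hind.isProbabilityMeasure
  have hS : MeasurableSet {u : Fin (m + 1) → α | ∀ j, (u i, u (i.succAbove j)) ∈ E j} :=
    (MeasurableEquiv.piFinSuccAbove (fun _ => α) i).measurable
      (measurableSet_setOf_forall_fst_snd_mem hE)
  have hXm : Measurable fun ω i => X i ω := measurable_pi_lambda _ hX
  rw [show {ω | ∀ j, (X i ω, X (i.succAbove j) ω) ∈ E j} = (fun ω i => X i ω) ⁻¹'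
      {u | ∀ j, (u i, u (i.succAbove j)) ∈ E j} from rfl,
    ← Measure.map_apply hXm hS, hind.map_fun_eq_pi_map fun i => (hX i).aemeasurable]
  exact Measure.pi_setOf_forall_succAbove_mem _ i hE

end ConditionOnCoordinate

lemma volume_Icc_zero_one_setOf_log_lt {s : ℝ} (hs : s ≤ 0) :
    volume.restrict (Icc (0 : ℝ) 1) {t | log t < s} = ENNReal.ofReal (exp s) := by
  have hset : {t | log t < s} ∩ Icc 0 1 = Ioo 0 (exp s) := by
    ext t
    simp only [mem_inter_iff, mem_ofPred_eq, mem_Icc, mem_Ioo]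
    constructor
    · rintro ⟨hlog, ht0, -⟩
      have ht : 0 < t := ht0.lt_of_ne <| by rintro rfl; simp at hlog; linarith
      exact ⟨ht, (log_lt_iff_lt_exp ht).1 hlog⟩
    · rintro ⟨ht, hts⟩
      exact ⟨(log_lt_iff_lt_exp ht).2 hts, ht.le, (hts.trans_le (exp_le_one_iff.2 hs)).le⟩
  rw [Measure.restrict_apply (measurableSet_lt measurable_log measurable_const), hset,
    volume_Ioo, sub_zero]

lemma prod_volume_Icc_zero_one_setOf_log_div_lt {ι : Type*} [Fintype ι] {q : ι → ℝ}
    (hq : ∀ j, 0 < q j) {L : ℝ} (hL : L ≤ 0) :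
    ∏ j, volume.restrict (Icc (0 : ℝ) 1) {t | log t / q j < L}
      = ENNReal.ofReal (exp ((∑ j, q j) * L)) := by
  have hfactor (j : ι) : volume.restrict (Icc (0 : ℝ) 1) {t | log t / q j < L}
      = ENNReal.ofReal (exp (q j * L)) := by
    simp_rw [div_lt_iff₀' (hq j)]
    exact volume_Icc_zero_one_setOf_log_lt (mul_nonpos_of_nonneg_of_nonpos (hq j).le hL)
  simp_rw [hfactor, Finset.sum_mul, exp_sum,
    ENNReal.ofReal_prod_of_nonneg fun j _ => (exp_pos _).le]

lemma lintegral_Ioc_zero_one_rpow {c : ℝ} (hc : -1 < c) :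
    ∫⁻ x in Ioc (0 : ℝ) 1, ENNReal.ofReal (x ^ c) = ENNReal.ofReal (1 / (c + 1)) := by
  have hint : IntegrableOn (fun x : ℝ => x ^ c) (Ioc 0 1) :=
    (intervalIntegrable_iff_integrableOn_Ioc_of_le zero_le_one).1
      (intervalIntegral.intervalIntegrable_rpow' hc)
  rw [← ofReal_integral_eq_lintegral_ofReal hint
      ((ae_restrict_iff' measurableSet_Ioc).2 (.of_forall fun x hx => rpow_nonneg hx.1.le c)),
    ← intervalIntegral.integral_of_le zero_le_one, integral_rpow (.inl hc),
    one_rpow, zero_rpow (by linarith), sub_zero]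

lemma lintegral_prod_volume_Icc_zero_one_setOf_log_div_lt {ι : Type*} [Fintype ι] {q : ι → ℝ}
    (hq : ∀ j, 0 < q j) {r : ℝ} (hr : 0 < r) :
    ∫⁻ x in Icc (0 : ℝ) 1,
        ∏ j, volume.restrict (Icc (0 : ℝ) 1) {t | log t / q j < log x / r}
      = ENNReal.ofReal (r / (r + ∑ j, q j)) := by
  have hc : -1 < (∑ j, q j) / r :=
    neg_one_lt_zero.trans_le (div_nonneg (Finset.sum_nonneg fun j _ => (hq j).le) hr.le)
  calc _ = ∫⁻ x in Ioc 0 1, ENNReal.ofReal (x ^ ((∑ j, q j) / r)) := by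
        rw [setLIntegral_congr Ioc_ae_eq_Icc.symm]
        refine setLIntegral_congr_fun measurableSet_Ioc fun x hx => ?_
        have hL : log x / r ≤ 0 := div_nonpos_of_nonpos_of_nonneg (log_nonpos hx.1.le hx.2) hr.le
        rw [prod_volume_Icc_zero_one_setOf_log_div_lt hq hL, rpow_def_of_pos hx.1]
        congr 2
        ring
    _ = _ := by
        rw [lintegral_Ioc_zero_one_rpow hc, div_add_one hr.ne', one_div_div, add_comm]

theorem gumbel_max_argmax_distribution_general
    {Ω : Type*} [MeasureSpace Ω]
    {n : ℕ} (R : Fin n → Ω → ℝ) (hmeas : ∀ y, Measurable (R y))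
    (hindep : iIndepFun R ℙ)
    (hunif : ∀ y, (ℙ : Measure Ω).map (R y) = volume.restrict (Set.Icc (0:ℝ) 1))
    (p : Fin n → ℝ) (hp : ∀ y, 0 < p y) (hsum : ∑ y, p y = 1)
    (y₀ : Fin n) :
    ℙ {ω | ∀ z, z ≠ y₀ → Real.log (R z ω) / p z < Real.log (R y₀ ω) / p y₀}
      = ENNReal.ofReal (p y₀) := by
  obtain ⟨m, rfl⟩ : ∃ m, n = m + 1 := ⟨n - 1, (Nat.succ_pred_eq_of_pos y₀.pos).symm⟩
  have hrest : ∑ j, p (y₀.succAbove j) = 1 - p y₀ := by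
    rw [← hsum, Fin.sum_univ_succAbove p y₀]; ring
  set E : Fin m → Set (ℝ × ℝ) := fun j =>
    {q | log q.2 / p (y₀.succAbove j) < log q.1 / p y₀}
  have hE (j : Fin m) : MeasurableSet (E j) :=
    measurableSet_lt ((measurable_log.comp measurable_snd).div_const _)
      ((measurable_log.comp measurable_fst).div_const _)
  have hevent : {ω | ∀ z, z ≠ y₀ → log (R z ω) / p z < log (R y₀ ω) / p y₀}
      = {ω | ∀ j, (R y₀ ω, R (y₀.succAbove j) ω) ∈ E j} := by
    ext ω
    simp [E, Fin.forall_iff_succAbove y₀, Fin.succAbove_ne]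
  rw [hevent, hindep.measure_forall_succAbove_mem hmeas y₀ hE]
  simp only [hunif, E, preimage_ofPred_eq]
  rw [lintegral_prod_volume_Icc_zero_one_setOf_log_div_lt (fun j => hp _) (hp y₀), hrest,
    add_sub_cancel, div_one]

/-- For every `y₀ : Fin n`, the probability that the (almost surely unique) argmax of
`y ↦ log (R y) / p y` equals `y₀` is exactly `p y₀`.  (We express "the argmax equals
`y₀`" as: `y₀`'s score is strictly larger than the score of every other token.) -/
theorem gumbel_max_argmax_distribution
    {Ω : Type*} [MeasureSpace Ω] [IsProbabilityMeasure (ℙ : Measure Ω)]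
    {n : ℕ} (R : Fin n → Ω → ℝ) (hmeas : ∀ y, Measurable (R y))
    (hindep : iIndepFun R ℙ)
    (hunif : ∀ y, (ℙ : Measure Ω).map (R y) = volume.restrict (Set.Icc (0:ℝ) 1))
    (p : Fin n → ℝ) (hp : ∀ y, 0 < p y) (hsum : ∑ y, p y = 1)
    (y₀ : Fin n) :
    ℙ {ω | ∀ z, z ≠ y₀ → Real.log (R z ω) / p z < Real.log (R y₀ ω) / p y₀}
      = ENNReal.ofReal (p y₀) :=
  gumbel_max_argmax_distribution_general R hmeas hindep hunif p hp hsum y₀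
end

section
/- Let d, n ≥ 1 and for each position i ∈ Fin d let p_i : Fin n → ℝ be a probability vector with p_{i,x} > 0 for all x and ∑_x p_{i,x} = 1. Let (R_{i,x})_{i ∈ Fin d, x ∈ Fin n} be independent random variables, each uniformly distributed on [0,1]. Then for every target sequence (y_i)_{i ∈ Fin d}, the probability that for every position i the value ln(R_{i,y_i})/p_{i,y_i} is strictly largest among {ln(R_{i,x})/p_{i,x} : x ∈ Fin n} equals ∏_{i=1}^d p_{i,y_i}. (Per-step distortion-freeness of the watermarked diffusion sampler: the jointly sampled sequence has the model's product distribution.) -/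
/-!
The joint law of the `R (i, x)` is the product of uniform laws, and currying turns it into a
product over positions of product laws over tokens, so the event factorises position by
position. At one position, conditionally on `R (i, y i) = t` the other scores lose to `y i`
independently, with probability `∏_{x ≠ y} t ^ (p x / p y) = t ^ ((1 - p y) / p y)`, and
integrating over `t ∈ (0, 1)` gives `1 / (1 + (1 - p y) / p y) = p y`.
-/

open MeasureTheory ProbabilityTheory Set

theorem measurePreserving_curry {ι κ X : Type*} [Fintype ι] [Fintype κ] [MeasurableSpace X]
    (μ : ι → κ → Measure X) [∀ i j, SigmaFinite (μ i j)] :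
    MeasurePreserving (MeasurableEquiv.curry ι κ X) (Measure.pi fun p : ι × κ => μ p.1 p.2)
      (Measure.pi fun i => Measure.pi (μ i)) := by
  refine MeasurePreserving.symm _ ⟨(MeasurableEquiv.curry ι κ X).symm.measurable, ?_⟩
  refine (Measure.pi_eq fun s hs => ?_).symm
  have hbox : (MeasurableEquiv.curry ι κ X).symm ⁻¹' univ.pi s
      = univ.pi fun i => univ.pi fun j => s (i, j) := by
    ext u; simp [MeasurableEquiv.coe_curry_symm]
  rw [Measure.map_apply (MeasurableEquiv.measurable _) (.univ_pi hs), hbox, Measure.pi_pi]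
  simp_rw [Measure.pi_pi, Fintype.prod_prod_type]

theorem volume_restrict_Ioo_log_div_lt {q c : ℝ} (hq : 0 < q) (hc : c < 0) :
    volume.restrict (Ioo (0:ℝ) 1) {s | Real.log s / q < c}
      = ENNReal.ofReal (Real.exp (c * q)) := by
  have hexp : Real.exp (c * q) < 1 := Real.exp_lt_one_iff.mpr (mul_neg_of_neg_of_pos hc hq)
  have hset : {s : ℝ | Real.log s / q < c} ∩ Ioo 0 1 = Ioo 0 (Real.exp (c * q)) := by
    ext s
    simp only [mem_inter_iff, mem_ofPred_eq, mem_Ioo, div_lt_iff₀ hq]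
    constructor
    · rintro ⟨hlog, hs, -⟩
      exact ⟨hs, (Real.log_lt_iff_lt_exp hs).mp hlog⟩
    · rintro ⟨hs, hlt⟩
      exact ⟨(Real.log_lt_iff_lt_exp hs).mpr hlt, hs, hlt.trans hexp⟩
  rw [Measure.restrict_apply' measurableSet_Ioo, hset, Real.volume_Ioo, sub_zero]

theorem pi_volume_restrict_Ioo_log_div_lt {κ : Type*} [Fintype κ] {q : κ → ℝ}
    (hq : ∀ j, 0 < q j) {c : ℝ} (hc : c < 0) :
    Measure.pi (fun _ : κ => volume.restrict (Ioo (0:ℝ) 1)) {v | ∀ j, Real.log (v j) / q j < c}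
      = ENNReal.ofReal (Real.exp (c * ∑ j, q j)) := by
  have hbox : {v : κ → ℝ | ∀ j, Real.log (v j) / q j < c}
      = univ.pi fun j => {s | Real.log s / q j < c} := by
    ext v; simp
  rw [hbox, Measure.pi_pi, Finset.mul_sum, Real.exp_sum,
    ENNReal.ofReal_prod_of_nonneg fun j _ => (Real.exp_pos _).le]
  exact Finset.prod_congr rfl fun j _ => volume_restrict_Ioo_log_div_lt (hq j) hc

theorem setLIntegral_Ioo_rpow {r : ℝ} (hr : -1 < r) :
    ∫⁻ t in Ioo (0:ℝ) 1, ENNReal.ofReal (t ^ r) = ENNReal.ofReal (1 / (r + 1)) := by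
  have hint : IntegrableOn (fun t : ℝ => t ^ r) (Ioc 0 1) :=
    (intervalIntegrable_iff_integrableOn_Ioc_of_le zero_le_one).mp
      (intervalIntegral.intervalIntegrable_rpow' hr)
  rw [← ofReal_integral_eq_lintegral_ofReal (hint.mono_set Ioo_subset_Ioc_self)
      (ae_restrict_of_forall_mem measurableSet_Ioo fun t ht => Real.rpow_nonneg ht.1.le r),
    ← integral_Ioc_eq_integral_Ioo, ← intervalIntegral.integral_of_le zero_le_one,
    integral_rpow (Or.inl hr), Real.one_rpow, Real.zero_rpow (by linarith), sub_zero]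

def gumbelArgmaxSet {κ : Type*} (p : κ → ℝ) (y : κ) : Set (κ → ℝ) :=
  {u | ∀ x, x ≠ y → Real.log (u x) / p x < Real.log (u y) / p y}

theorem measurableSet_gumbelArgmaxSet {κ : Type*} [Countable κ] (p : κ → ℝ) (y : κ) :
    MeasurableSet (gumbelArgmaxSet p y) := by
  have hset : gumbelArgmaxSet p y = ⋂ x, ⋂ (_ : x ≠ y),
      {u : κ → ℝ | Real.log (u x) / p x < Real.log (u y) / p y} := by
    ext u; simp [gumbelArgmaxSet]
  rw [hset]
  exact .iInter fun x => .iInter fun _ => measurableSet_lt (by fun_prop) (by fun_prop)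

theorem gumbelArgmaxSet_eq_preimage_piFinSuccAbove {m : ℕ} (p : Fin (m + 1) → ℝ)
    (y : Fin (m + 1)) :
    gumbelArgmaxSet p y = MeasurableEquiv.piFinSuccAbove (fun _ => ℝ) y ⁻¹'
      {tv | ∀ j, Real.log (tv.2 j) / p (y.succAbove j) < Real.log tv.1 / p y} := by
  ext u
  simp only [gumbelArgmaxSet, mem_ofPred_eq, mem_preimage,
    MeasurableEquiv.piFinSuccAbove_apply, Fin.insertNthEquiv_symm_apply]
  rw [Fin.forall_iff_succAbove y]
  simp [Fin.removeNth, Fin.succAbove_ne]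

theorem pi_gumbelArgmaxSet {n : ℕ} {p : Fin n → ℝ} (hp : ∀ x, 0 < p x)
    (hsum : ∑ x, p x = 1) (y : Fin n) :
    Measure.pi (fun _ : Fin n => volume.restrict (Ioo (0:ℝ) 1)) (gumbelArgmaxSet p y)
      = ENNReal.ofReal (p y) := by
  obtain ⟨m, rfl⟩ : ∃ m, n = m + 1 := Nat.exists_eq_add_one.mpr y.pos
  set μ : Measure ℝ := volume.restrict (Ioo 0 1)
  set r : ℝ := (1 - p y) / p y
  set B : Set (ℝ × (Fin m → ℝ)) :=
    {tv | ∀ j, Real.log (tv.2 j) / p (y.succAbove j) < Real.log tv.1 / p y}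
  have hB : MeasurableSet B := by
    simp only [B, ofPred_forall]
    exact .iInter fun j => measurableSet_lt (by fun_prop) (by fun_prop)
  have hrest : ∑ j : Fin m, p (y.succAbove j) = 1 - p y := by
    rw [← hsum, Fin.sum_univ_succAbove p y]; ring
  have hr : -1 < r := by
    have : 0 ≤ r := div_nonneg (hrest ▸ Finset.sum_nonneg fun j _ => (hp _).le) (hp y).le
    linarith
  have hsection : ∀ t ∈ Ioo (0:ℝ) 1,
      Measure.pi (fun _ : Fin m => μ) (Prod.mk t ⁻¹' B) = ENNReal.ofReal (t ^ r) := by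
    intro t ht
    have hc : Real.log t / p y < 0 := div_neg_of_neg_of_pos (Real.log_neg ht.1 ht.2) (hp y)
    rw [← Real.exp_log (Real.rpow_pos_of_pos ht.1 r), Real.log_rpow ht.1]
    convert pi_volume_restrict_Ioo_log_div_lt (fun j => hp (y.succAbove j)) hc using 3
    · rfl
    · rw [hrest]; ring
  rw [gumbelArgmaxSet_eq_preimage_piFinSuccAbove,
    (measurePreserving_piFinSuccAbove (fun _ => μ) y).measure_preimage hB.nullMeasurableSet,
    Measure.prod_apply hB, setLIntegral_congr_fun measurableSet_Ioo hsection,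
    setLIntegral_Ioo_rpow hr, div_add_one (hp y).ne', sub_add_cancel, one_div_one_div]

theorem gumbel_max_diffusion_product_distribution_general
    {Ω : Type*} [MeasureSpace Ω] [IsProbabilityMeasure (ℙ : Measure Ω)]
    {d n : ℕ}
    (p : Fin d → Fin n → ℝ) (hp : ∀ i x, 0 < p i x) (hsum : ∀ i, ∑ x, p i x = 1)
    (R : Fin d × Fin n → Ω → ℝ) (hmeas : ∀ ix, Measurable (R ix))
    (hindep : iIndepFun R ℙ)
    (hunif : ∀ ix, (ℙ : Measure Ω).map (R ix) = volume.restrict (Set.Icc (0:ℝ) 1))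
    (y : Fin d → Fin n) :
    ℙ {ω | ∀ i : Fin d, ∀ x : Fin n, x ≠ y i →
        Real.log (R (i, x) ω) / p i x < Real.log (R (i, y i) ω) / p i (y i)}
      = ENNReal.ofReal (∏ i, p i (y i)) := by
  -- Passing from `Icc` to the a.e. equal `Ioo` keeps `Real.log` away from its junk value at `0`.
  set μ : Measure ℝ := volume.restrict (Ioo 0 1)
  have hlaw : (ℙ : Measure Ω).map (fun ω ix => R ix ω) = Measure.pi fun _ => μ := by
    rw [(iIndepFun_iff_map_fun_eq_pi_map fun ix => (hmeas ix).aemeasurable).mp hindep]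
    simp_rw [hunif, μ, Measure.restrict_congr_set Ioo_ae_eq_Icc]
  set A := univ.pi fun i => gumbelArgmaxSet (p i) (y i)
  have hA : MeasurableSet A := .univ_pi fun i => measurableSet_gumbelArgmaxSet _ _
  have hevent : {ω | ∀ i : Fin d, ∀ x : Fin n, x ≠ y i →
      Real.log (R (i, x) ω) / p i x < Real.log (R (i, y i) ω) / p i (y i)}
      = (fun ω ix => R ix ω) ⁻¹' (MeasurableEquiv.curry _ _ ℝ ⁻¹' A) := by
    ext ω; simp [A, gumbelArgmaxSet, MeasurableEquiv.coe_curry]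
  rw [hevent, ← Measure.map_apply (measurable_pi_lambda _ hmeas)
      ((MeasurableEquiv.curry _ _ ℝ).measurable hA), hlaw,
    (measurePreserving_curry fun _ _ => μ).measure_preimage hA.nullMeasurableSet, Measure.pi_pi,
    ENNReal.ofReal_prod_of_nonneg fun i _ => (hp i (y i)).le]
  exact Finset.prod_congr rfl fun i _ => pi_gumbelArgmaxSet (hp i) (hsum i) (y i)

/-- **Per-step distortion-freeness of the watermarked diffusion sampler.**
For each position `i : Fin d` let `p i` be a probability vector on `Fin n` with
positive entries, and let `R (i, x)` be independent `Unif[0,1]` random variables.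
Then for every target sequence `y`, the probability that at every position `i` the
score `log (R (i, y i)) / p i (y i)` is strictly largest among all
`log (R (i, x)) / p i x` equals `∏ i, p i (y i)`. -/
theorem gumbel_max_diffusion_product_distribution
    {Ω : Type*} [MeasureSpace Ω] [IsProbabilityMeasure (ℙ : Measure Ω)]
    {d n : ℕ} (hd : 1 ≤ d) (hn : 1 ≤ n)
    (p : Fin d → Fin n → ℝ) (hp : ∀ i x, 0 < p i x) (hsum : ∀ i, ∑ x, p i x = 1)
    (R : Fin d × Fin n → Ω → ℝ) (hmeas : ∀ ix, Measurable (R ix))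
    (hindep : iIndepFun R ℙ)
    (hunif : ∀ ix, (ℙ : Measure Ω).map (R ix) = volume.restrict (Set.Icc (0:ℝ) 1))
    (y : Fin d → Fin n) :
    ℙ {ω | ∀ i : Fin d, ∀ x : Fin n, x ≠ y i →
        Real.log (R (i, x) ω) / p i x < Real.log (R (i, y i) ω) / p i (y i)}
      = ENNReal.ofReal (∏ i, p i (y i)) :=
  gumbel_max_diffusion_product_distribution_general p hp hsum R hmeas hindep hunif y
end

section
/- Let m, L be positive integers and ζ > 0. For each s ∈ Fin m, let (R_{s,i})_{i=1}^L be random variables such that for each fixed s the R_{s,1}, …, R_{s,L} are independent and each uniformly distributed on [0,1], and set S_s = (1/L) ∑_{i=1}^L (−ln(1 − R_{s,i})). Then P(∃ s ∈ Fin m, S_s > 1 + ζ) ≤ m · exp(−L(ζ − ln(1+ζ))). (Theorem 2: the probability that the detector with threshold τ = 1 + ζ declares unwatermarked text watermarked, maximizing over m seed offsets, is at most m·exp(−L(ζ − ln(1+ζ))).) -/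
open MeasureTheory ProbabilityTheory
open scoped ENNReal

/-! The score `-log (1 - R)` of a uniform `R` is `Exp(1)`-distributed, with moment generating
function `(1 - t)⁻¹` for `t < 1`. The Chernoff bound for a sum of `L` independent copies at
`t = ζ / (1 + ζ)` gives `exp (-L (ζ - log (1 + ζ)))` for each offset, and a union bound over the
`m` offsets finishes the proof. -/

open Real Set Finset

theorem exp_mul_neg_log_one_sub_ae_eq_rpow (t : ℝ) :
    (fun x : ℝ => exp (t * -log (1 - x)))
      =ᵐ[volume.restrict (Icc 0 1)] fun x => (1 - x) ^ (-t) := by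
  filter_upwards [ae_restrict_mem measurableSet_Icc, ae_restrict_of_ae (Measure.ae_ne volume 1)]
    with x hx hx1
  rw [rpow_def_of_pos (by linarith [lt_of_le_of_ne hx.2 hx1])]
  ring_nf

theorem intervalIntegrable_one_sub_rpow_neg {t : ℝ} (ht : t < 1) :
    IntervalIntegrable (fun x : ℝ => (1 - x) ^ (-t)) volume 0 1 := by
  simpa using ((intervalIntegral.intervalIntegrable_rpow' (a := 0) (b := 1)
    (r := -t) (by linarith)).comp_sub_left 1).symm

theorem intervalIntegral_one_sub_rpow_neg {t : ℝ} (ht : t < 1) :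
    ∫ x in (0 : ℝ)..1, (1 - x) ^ (-t) = (1 - t)⁻¹ := by
  rw [intervalIntegral.integral_comp_sub_left (fun x : ℝ => x ^ (-t)), sub_self, sub_zero,
    integral_rpow (Or.inl (by linarith)), one_rpow, zero_rpow (by linarith)]
  ring

theorem integrableOn_exp_mul_neg_log_one_sub {t : ℝ} (ht : t < 1) :
    IntegrableOn (fun x : ℝ => exp (t * -log (1 - x))) (Icc 0 1) := by
  refine Integrable.congr ?_ (exp_mul_neg_log_one_sub_ae_eq_rpow t).symm
  exact (intervalIntegrable_iff_integrableOn_Icc_of_le zero_le_one).1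
    (intervalIntegrable_one_sub_rpow_neg ht)

theorem setIntegral_exp_mul_neg_log_one_sub {t : ℝ} (ht : t < 1) :
    ∫ x in Icc (0 : ℝ) 1, exp (t * -log (1 - x)) = (1 - t)⁻¹ := by
  rw [integral_congr_ae (exp_mul_neg_log_one_sub_ae_eq_rpow t), integral_Icc_eq_integral_Ioc,
    ← intervalIntegral.integral_of_le zero_le_one, intervalIntegral_one_sub_rpow_neg ht]

section UniformScore

variable {Ω : Type*} [MeasurableSpace Ω] {μ : Measure Ω} {U : Ω → ℝ} {t : ℝ}

theorem integrable_exp_mul_neg_log_one_sub (hU : AEMeasurable U μ)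
    (hmap : μ.map U = volume.restrict (Icc 0 1)) (ht : t < 1) :
    Integrable (fun ω => exp (t * -log (1 - U ω))) μ := by
  have hg : Measurable fun x : ℝ => exp (t * -log (1 - x)) := by fun_prop
  refine (integrable_map_measure hg.aestronglyMeasurable hU).1 ?_
  rw [hmap]
  exact integrableOn_exp_mul_neg_log_one_sub ht

theorem mgf_neg_log_one_sub (hU : AEMeasurable U μ)
    (hmap : μ.map U = volume.restrict (Icc 0 1)) (ht : t < 1) :
    mgf (fun ω => -log (1 - U ω)) μ t = (1 - t)⁻¹ := by
  have hg : Measurable fun x : ℝ => exp (t * -log (1 - x)) := by fun_prop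
  rw [← setIntegral_exp_mul_neg_log_one_sub ht, ← hmap, integral_map hU hg.aestronglyMeasurable]
  rfl

end UniformScore

theorem measure_sum_ge_le_of_iIndepFun_of_mgf_eq {Ω ι : Type*} [MeasurableSpace Ω]
    {μ : Measure Ω} {X : ι → Ω → ℝ} (h_indep : iIndepFun X μ) (h_meas : ∀ i, Measurable (X i))
    {t M : ℝ} (ht : 0 ≤ t) (h_int : ∀ i, Integrable (fun ω => exp (t * X i ω)) μ)
    (h_mgf : ∀ i, mgf (X i) μ t = M) (s : Finset ι) (ε : ℝ) :
    μ {ω | ε ≤ ∑ i ∈ s, X i ω} ≤ ENNReal.ofReal (exp (-t * ε) * M ^ #s) := by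
  have := h_indep.isProbabilityMeasure
  have h_chernoff := measure_ge_le_exp_mul_mgf ε ht
    (h_indep.integrable_exp_mul_sum h_meas (s := s) fun i _ => h_int i)
  rw [h_indep.mgf_sum h_meas, Finset.prod_congr rfl fun i _ => h_mgf i, prod_const] at h_chernoff
  rw [← ofReal_measureReal]
  gcongr
  simpa only [Finset.sum_apply] using h_chernoff

theorem natCast_mul_le_of_lt_one_div_mul {n : ℕ} {c x : ℝ} (hc : 0 < c)
    (h : c < 1 / (n : ℝ) * x) : n * c ≤ x := by
  rcases n.eq_zero_or_pos with rfl | hn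
  · simp only [Nat.cast_zero, div_zero, zero_mul] at h
    exact absurd h hc.not_gt
  · rw [one_div] at h
    exact ((lt_inv_mul_iff₀ (Nat.cast_pos.2 hn)).1 h).le

theorem detector_false_alarm_union_bound_general
    {Ω : Type*} [MeasureSpace Ω]
    {m L : ℕ}
    (R : Fin m → Fin L → Ω → ℝ) (hmeas : ∀ s i, Measurable (R s i))
    (hindep : ∀ s, iIndepFun (R s) ℙ)
    (hunif : ∀ s i, (ℙ : Measure Ω).map (R s i) = volume.restrict (Set.Icc (0:ℝ) 1))
    (ζ : ℝ) (hζ : 0 < ζ) :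
    ℙ {ω | ∃ s : Fin m, (1 / (L : ℝ)) * ∑ i, (-Real.log (1 - R s i ω)) > 1 + ζ}
      ≤ (m : ℝ≥0∞) * ENNReal.ofReal (Real.exp (-(L : ℝ) * (ζ - Real.log (1 + ζ)))) := by
  set t := ζ / (1 + ζ)
  have h1ζ : 0 < 1 + ζ := by linarith
  have ht : t < 1 := (div_lt_one h1ζ).2 (by linarith)
  have h_exponent : exp (-t * (L * (1 + ζ))) * (1 - t)⁻¹ ^ L
      = exp (-(L : ℝ) * (ζ - log (1 + ζ))) := by
    have h_tζ : t * (1 + ζ) = ζ := div_mul_cancel₀ ζ h1ζ.ne'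
    have h_inv : (1 - t)⁻¹ = exp (log (1 + ζ)) := by
      rw [exp_log h1ζ, inv_eq_iff_eq_inv]
      exact eq_inv_of_mul_eq_one_left (by rw [sub_mul, h_tζ]; ring)
    rw [h_inv, ← exp_nat_mul, ← exp_add, neg_mul, mul_left_comm, h_tζ]
    ring_nf
  have h_offset : ∀ s, ℙ {ω | (L : ℝ) * (1 + ζ) ≤ ∑ i, -log (1 - R s i ω)}
      ≤ ENNReal.ofReal (exp (-(L : ℝ) * (ζ - log (1 + ζ)))) := fun s => by
    simpa only [Function.comp_apply, card_univ, Fintype.card_fin, h_exponent] using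
      measure_sum_ge_le_of_iIndepFun_of_mgf_eq
        ((hindep s).comp (fun _ x => -log (1 - x)) fun _ => by fun_prop)
        (fun i => by fun_prop) (by positivity)
        (fun i => integrable_exp_mul_neg_log_one_sub (hmeas s i).aemeasurable (hunif s i) ht)
        (fun i => mgf_neg_log_one_sub (hmeas s i).aemeasurable (hunif s i) ht)
        univ (L * (1 + ζ))
  calc ℙ {ω | ∃ s : Fin m, (1 / (L : ℝ)) * ∑ i, (-log (1 - R s i ω)) > 1 + ζ}
      ≤ ℙ (⋃ s, {ω | (L : ℝ) * (1 + ζ) ≤ ∑ i, -log (1 - R s i ω)}) :=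
        measure_mono fun ω ⟨s, hs⟩ =>
          mem_iUnion.2 ⟨s, natCast_mul_le_of_lt_one_div_mul (by linarith) hs⟩
    _ ≤ ∑ s, ℙ {ω | (L : ℝ) * (1 + ζ) ≤ ∑ i, -log (1 - R s i ω)} :=
        measure_iUnion_fintype_le _ _
    _ ≤ ∑ _ : Fin m, ENNReal.ofReal (exp (-(L : ℝ) * (ζ - log (1 + ζ)))) :=
        sum_le_sum fun s _ => h_offset s
    _ = _ := by rw [sum_const, card_univ, Fintype.card_fin, nsmul_eq_mul]

/-- **Theorem 2 (probability of false detection).**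
For each offset `s : Fin m`, let `R s 1, …, R s L` be random variables that (for
fixed `s`) are independent and uniform on `[0,1]`, with normalized score
`S_s = (1/L) ∑ i, -log (1 - R s i)`.  Then the probability that some offset's score
exceeds the threshold `1 + ζ` is at most `m * exp (-L (ζ - log (1 + ζ)))`. -/
theorem detector_false_alarm_union_bound
    {Ω : Type*} [MeasureSpace Ω] [IsProbabilityMeasure (ℙ : Measure Ω)]
    {m L : ℕ} (hm : 0 < m) (hL : 0 < L)
    (R : Fin m → Fin L → Ω → ℝ) (hmeas : ∀ s i, Measurable (R s i))
    (hindep : ∀ s, iIndepFun (R s) ℙ)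
    (hunif : ∀ s i, (ℙ : Measure Ω).map (R s i) = volume.restrict (Set.Icc (0:ℝ) 1))
    (ζ : ℝ) (hζ : 0 < ζ) :
    ℙ {ω | ∃ s : Fin m, (1 / (L : ℝ)) * ∑ i, (-Real.log (1 - R s i ω)) > 1 + ζ}
      ≤ (m : ℝ≥0∞) * ENNReal.ofReal (Real.exp (-(L : ℝ) * (ζ - Real.log (1 + ζ)))) :=
  detector_false_alarm_union_bound_general R hmeas hindep hunif ζ hζ
end
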